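/- arXiv:0811.1525 — 2 statements merged into one kernel-verified Lean document; each statement's English description precedes it below -/
import Mathlib

section
/- Let P ⊆ ℝⁿ be a discrete point set and p ∈ P such that V(p) is not a polyhedron. Then p lies on the boundary of conv(P). -/
open scoped RealInnerProductSpace
open Set

noncomputable section

abbrev E (n : ℕ) := EuclideanSpace ℝ (Fin n)

/-- `P` is discrete: every bounded set contains only finitely many points of `P`. -/
def IsDiscretePointSet {n : ℕ} (P : Set (E n)) : Prop :=
  ∀ B : Set (E n), Bornology.IsBounded B → (P ∩ B).Finite

/-- The Voronoi cell of `p` relative to `P`. -/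
def voronoiCell {n : ℕ} (P : Set (E n)) (p : E n) : Set (E n) :=
  {x | ∀ q ∈ P, dist x p ≤ dist x q}

/-- A polyhedron: a finite intersection of closed half-spaces. -/
def IsPolyhedron {n : ℕ} (S : Set (E n)) : Prop :=
  ∃ (k : ℕ) (y : Fin k → E n) (α : Fin k → ℝ),
    S = ⋂ i, {x : E n | (inner ℝ x (y i) : ℝ) ≤ α i}

/-- A polytope: a bounded polyhedron. -/
def IsPolytope {n : ℕ} (S : Set (E n)) : Prop :=
  IsPolyhedron S ∧ Bornology.IsBounded S

/-- The half-space of points at least as close to `p` as to `q`. -/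
def halfSpace {n : ℕ} (p q : E n) : Set (E n) :=
  {x : E n | (inner ℝ (x - p) (q - p) : ℝ) ≤ (1/2) * ‖q - p‖^2}

/-- The conic hull: all nonnegative combinations of finitely many elements of `M`. -/
def coneHull {n : ℕ} (M : Set (E n)) : Set (E n) :=
  {x | ∃ (k : ℕ) (v : Fin k → E n) (c : Fin k → ℝ),
    (∀ i, v i ∈ M) ∧ (∀ i, 0 ≤ c i) ∧ x = ∑ i, c i • v i}

/-- The direction cone of `p`: the conic hull of `P - p`. -/
def dirCone {n : ℕ} (P : Set (E n)) (p : E n) : Set (E n) :=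
  coneHull ((fun q => q - p) '' P)

/-- A cone is finitely generated if it is the conic hull of finitely many vectors. -/
def FinitelyGeneratedCone {n : ℕ} (C : Set (E n)) : Prop :=
  ∃ (k : ℕ) (v : Fin k → E n), C = coneHull (Set.range v)

/-- `q` is Voronoi relevant for `p`: dropping `halfSpace p q` strictly enlarges the
intersection defining the Voronoi cell. -/
def VoronoiRelevant {n : ℕ} (P : Set (E n)) (p q : E n) : Prop :=
  (⋂ r ∈ P \ {p}, halfSpace p r) ⊂ ⋂ r ∈ P \ {p, q}, halfSpace p r

/-!
If `p` were interior to `conv P`, a ball around `p` would lie in `conv P`, so every unit direction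
`v` is matched by some `q ∈ P` with `⟪v, q - p⟫ > ε`; by compactness of the unit sphere finitely many
such `q` suffice, and their half-spaces confine `V(p)` to a ball of radius `R`. The half-space of a
point farther than `2R` from `p` contains that ball, hence is redundant, and by discreteness only
finitely many points of `P` are nearer. So `V(p)` would be a polyhedron.
-/

theorem dist_le_dist_iff_inner_sub_le {V : Type*} [NormedAddCommGroup V] [InnerProductSpace ℝ V]
    (x p q : V) : dist x p ≤ dist x q ↔ ⟪x - p, q - p⟫ ≤ 1 / 2 * ‖q - p‖ ^ 2 := by
  have hxq : ‖x - q‖ ^ 2 = ‖x - p‖ ^ 2 - 2 * ⟪x - p, q - p⟫ + ‖q - p‖ ^ 2 := by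
    rw [← norm_sub_sq_real, sub_sub_sub_cancel_right]
  rw [← sq_le_sq₀ dist_nonneg dist_nonneg, dist_eq_norm, dist_eq_norm, hxq]
  constructor <;> intro h <;> linarith

theorem exists_finite_forall_inner_sub_gt_of_mem_interior_convexHull {V : Type*}
    [NormedAddCommGroup V] [InnerProductSpace ℝ V] [ProperSpace V] {P : Set V} {p : V}
    (hp : p ∈ interior (convexHull ℝ P)) :
    ∃ F ⊆ P, F.Finite ∧ ∃ ε > 0, ∀ v : V, ‖v‖ = 1 → ∃ q ∈ F, ε < ⟪v, q - p⟫ := by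
  obtain ⟨r, hr, hball⟩ := Metric.mem_nhds_iff.mp (mem_interior_iff_mem_nhds.mp hp)
  have hcover : Metric.sphere (0 : V) 1 ⊆ ⋃ q ∈ P, {v : V | r / 4 < ⟪v, q - p⟫} := by
    intro v hv
    rw [mem_sphere_zero_iff_norm] at hv
    have hmem : p + (r / 2) • v ∈ convexHull ℝ P := hball <| by
      rw [Metric.mem_ball, dist_self_add_left, norm_smul, hv, Real.norm_eq_abs,
        abs_of_pos (half_pos hr)]
      linarith
    obtain ⟨q, hqP, hq⟩ := ((innerₛₗ ℝ v).convexOn convex_univ).exists_ge_of_mem_convexHull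
      (subset_univ P) hmem
    simp only [innerₛₗ_apply_apply, inner_add_right, real_inner_smul_right,
      real_inner_self_eq_norm_sq, hv] at hq
    refine mem_biUnion hqP ?_
    rw [mem_ofPred_eq, inner_sub_right]
    linarith
  obtain ⟨F, hFP, hF, hsub⟩ := (isCompact_sphere (0 : V) 1).elim_finite_subcover_image
    (fun q _ => isOpen_lt continuous_const (continuous_id.inner continuous_const)) hcover
  refine ⟨F, hFP, hF, r / 4, by positivity, fun v hv => ?_⟩
  simpa using hsub (mem_sphere_zero_iff_norm.mpr hv)

section halfSpace

variable {n : ℕ}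

theorem voronoiCell_eq_biInter_halfSpace (P : Set (E n)) (p : E n) :
    voronoiCell P p = ⋂ q ∈ P, halfSpace p q := by
  ext x
  simp only [voronoiCell, halfSpace, mem_iInter₂, mem_ofPred_eq, dist_le_dist_iff_inner_sub_le]

theorem closedBall_subset_halfSpace {p q : E n} {R : ℝ} (hq : 2 * R ≤ ‖q - p‖) :
    Metric.closedBall p R ⊆ halfSpace p q := by
  intro x hx
  rw [Metric.mem_closedBall, dist_eq_norm] at hx
  calc ⟪x - p, q - p⟫ ≤ ‖x - p‖ * ‖q - p‖ := real_inner_le_norm _ _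
    _ ≤ 1 / 2 * ‖q - p‖ * ‖q - p‖ := by gcongr; linarith
    _ = 1 / 2 * ‖q - p‖ ^ 2 := by ring

theorem exists_biInter_halfSpace_subset_closedBall {F : Set (E n)} (hF : F.Finite) {p : E n}
    {ε : ℝ} (hε : 0 < ε) (hdir : ∀ v : E n, ‖v‖ = 1 → ∃ q ∈ F, ε < ⟪v, q - p⟫) :
    ∃ R, ⋂ q ∈ F, halfSpace p q ⊆ Metric.closedBall p R := by
  obtain ⟨D, hD⟩ := hF.isBounded.subset_closedBall p
  refine ⟨D ^ 2 / (2 * ε), fun x hx => ?_⟩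
  rw [Metric.mem_closedBall, dist_eq_norm, le_div_iff₀ (by positivity)]
  rcases eq_or_ne x p with rfl | hxp
  · simp [sq_nonneg]
  have hxp' : x - p ≠ 0 := sub_ne_zero.mpr hxp
  have hnorm : 0 < ‖x - p‖ := norm_pos_iff.mpr hxp'
  obtain ⟨q, hqF, hq⟩ := hdir (‖x - p‖⁻¹ • (x - p)) (norm_smul_inv_norm hxp')
  rw [real_inner_smul_left, lt_inv_mul_iff₀ hnorm] at hq
  have hqD : ‖q - p‖ ≤ D := by simpa [dist_eq_norm] using hD hqF
  have hhalf : ⟪x - p, q - p⟫ ≤ 1 / 2 * ‖q - p‖ ^ 2 := mem_iInter₂.mp hx q hqF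
  nlinarith [norm_nonneg (q - p)]

theorem biInter_halfSpace_eq_union_inter_closedBall {F S : Set (E n)} (hFS : F ⊆ S) {p : E n}
    {R : ℝ} (hF : ⋂ q ∈ F, halfSpace p q ⊆ Metric.closedBall p R) :
    ⋂ q ∈ S, halfSpace p q = ⋂ q ∈ F ∪ S ∩ Metric.closedBall p (2 * R), halfSpace p q := by
  refine (biInter_subset_biInter_left (union_subset hFS inter_subset_left)).antisymm
    fun x hx => mem_iInter₂.mpr fun q hqS => ?_
  by_cases hq : q ∈ Metric.closedBall p (2 * R)
  · exact mem_iInter₂.mp hx q (Or.inr ⟨hqS, hq⟩)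
  · have hxR : x ∈ Metric.closedBall p R :=
      hF (biInter_subset_biInter_left subset_union_left hx)
    rw [Metric.mem_closedBall, not_le, dist_eq_norm] at hq
    exact closedBall_subset_halfSpace hq.le hxR

theorem halfSpace_eq (p q : E n) :
    halfSpace p q = {x | ⟪x, q - p⟫ ≤ 1 / 2 * ‖q - p‖ ^ 2 + ⟪p, q - p⟫} := by
  ext x
  simp only [halfSpace, mem_ofPred_eq, inner_sub_left, sub_le_iff_le_add]

theorem isPolyhedron_iInter {ι : Type*} [Finite ι] (y : ι → E n) (α : ι → ℝ) :
    IsPolyhedron (⋂ i, {x : E n | ⟪x, y i⟫ ≤ α i}) := by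
  obtain ⟨k, ⟨e⟩⟩ := Finite.exists_equiv_fin ι
  exact ⟨k, y ∘ e.symm, α ∘ e.symm,
    (e.symm.surjective.iInter_comp fun i => {x | ⟪x, y i⟫ ≤ α i}).symm⟩

theorem isPolyhedron_biInter_halfSpace {G : Set (E n)} (hG : G.Finite) (p : E n) :
    IsPolyhedron (⋂ q ∈ G, halfSpace p q) := by
  have := hG.to_subtype
  simp_rw [biInter_eq_iInter, halfSpace_eq]
  exact isPolyhedron_iInter (fun q : G => (q : E n) - p) _

end halfSpace

theorem stmt8 {n : ℕ} (P : Set (E n)) (hP : IsDiscretePointSet P) (p : E n) (hp : p ∈ P)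
    (hnp : ¬ IsPolyhedron (voronoiCell P p)) :
    p ∈ frontier (convexHull ℝ P) := by
  by_contra hfr
  have hint : p ∈ interior (convexHull ℝ P) := by
    by_contra hni
    exact hfr ⟨subset_closure (subset_convexHull ℝ P hp), hni⟩
  obtain ⟨F, hFP, hF, ε, hε, hdir⟩ :=
    exists_finite_forall_inner_sub_gt_of_mem_interior_convexHull hint
  obtain ⟨R, hR⟩ := exists_biInter_halfSpace_subset_closedBall hF hε hdir
  apply hnp
  rw [voronoiCell_eq_biInter_halfSpace, biInter_halfSpace_eq_union_inter_closedBall hFP hR]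
  exact isPolyhedron_biInter_halfSpace (hF.union (hP _ Metric.isBounded_closedBall)) p
end
end

section
/- Let P ⊆ ℝⁿ be a discrete point set and p ∈ P a boundary point of conv(P). If the direction cone C(p) = cone(P − p) is not closed, then V(p) is not a polyhedron. -/
open scoped RealInnerProductSpace
open Set

noncomputable section

/-!
Suppose `V(p)` is a polyhedron and fix an irredundant description
`V(p) = ⋂ i ∈ S, {x | ⟪x, y i⟫ ≤ α i}`. Each constraint is tight at some `z ∈ V(p)`. By
discreteness, near `z` the cell is cut out by the finitely many bisectors of `p` and the points `q`
equidistant from `z` and `p`, so Farkas' lemma puts `y i` in the cone spanned by these `q - p`,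
hence in `C(p)`. Conversely, every direction `d` with `⟪d, y i⟫ ≤ 0` for all `i` is a recession
direction of `V(p)`, which forces `⟪d, q - p⟫ ≤ 0` for all `q ∈ P`; by Farkas' lemma again the
closure of `C(p)` lies in the cone spanned by the `y i`. Finitely generated cones are closed
(conic Carathéodory), so `C(p)` is closed.
-/

open Filter Topology PointedCone ProperCone

namespace PointedCone

variable {F : Type*}

section Algebra

variable [AddCommGroup F] [Module ℝ F]

theorem mem_hull_finset_iff {s : Finset F} {x : F} :
    x ∈ hull ℝ (s : Set F) ↔ ∃ c : F → ℝ, (∀ a ∈ s, 0 ≤ c a) ∧ ∑ a ∈ s, c a • a = x := by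
  constructor
  · intro hx
    obtain ⟨f, -, rfl⟩ := Submodule.mem_span_finset.mp hx
    exact ⟨fun a => f a, fun a _ => (f a).2, by simp⟩
  · rintro ⟨c, hc, rfl⟩
    exact Submodule.sum_mem _ fun a ha => (hull ℝ _).smul_mem (hc a ha) (subset_hull ha)

theorem exists_mem_hull_erase_of_not_linearIndepOn [DecidableEq F] {s : Finset F}
    (h : ¬ LinearIndepOn ℝ id (s : Set F)) {x : F} (hx : x ∈ hull ℝ (s : Set F)) :
    ∃ v ∈ s, x ∈ hull ℝ (s.erase v : Set F) := by
  obtain ⟨c, hc, rfl⟩ := mem_hull_finset_iff.mp hx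
  obtain ⟨g, hg, hpos⟩ : ∃ g : F → ℝ, ∑ a ∈ s, g a • a = 0 ∧ ∃ a ∈ s, 0 < g a := by
    obtain ⟨g, hg, a, ha, hga⟩ := not_linearIndepOn_finset_iff.mp h
    rcases hga.lt_or_gt with hneg | hpos
    · exact ⟨-g, by simpa [neg_smul] using hg, a, ha, by simpa using hneg⟩
    · exact ⟨g, by simpa using hg, a, ha, hpos⟩
  obtain ⟨v, hv, hmin⟩ := (s.filter (0 < g ·)).exists_min_image (fun a => c a / g a)
    (by simpa [Finset.Nonempty] using hpos)
  rw [Finset.mem_filter] at hv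
  -- Subtract the multiple of the relation `g` that first kills a coefficient, namely that of `v`.
  set k : F → ℝ := fun a => c a - c v / g v * g a
  refine ⟨v, hv.1, mem_hull_finset_iff.mpr ⟨k, fun a ha => ?_, ?_⟩⟩
  · have ha := Finset.mem_of_mem_erase ha
    rcases lt_or_ge 0 (g a) with hga | hga
    · have := hmin a (Finset.mem_filter.mpr ⟨ha, hga⟩)
      rw [le_div_iff₀ hga] at this
      simp only [k]; linarith
    · have : c v / g v * g a ≤ 0 :=
        mul_nonpos_of_nonneg_of_nonpos (div_nonneg (hc v hv.1) hv.2.le) hga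
      simp only [k]; linarith [hc a ha]
  · rw [Finset.sum_erase _ (by simp [k, hv.2.ne'])]
    simp only [k, sub_smul, mul_smul, Finset.sum_sub_distrib, ← Finset.smul_sum, hg, smul_zero,
      sub_zero]

theorem exists_linearIndepOn_subset_of_mem_hull [DecidableEq F] {s : Finset F} {x : F}
    (hx : x ∈ hull ℝ (s : Set F)) :
    ∃ t ⊆ s, LinearIndepOn ℝ id (t : Set F) ∧ x ∈ hull ℝ (t : Set F) := by
  obtain ⟨t, hts, ht⟩ :=
    exists_minimal_le_of_wellFoundedLT (fun t : Finset F => x ∈ hull ℝ (t : Set F)) s hx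
  refine ⟨t, hts, ?_, ht.prop⟩
  by_contra hli
  obtain ⟨v, hv, hxv⟩ := exists_mem_hull_erase_of_not_linearIndepOn hli ht.prop
  exact (Finset.erase_ssubset hv).not_ge (ht.2 hxv (Finset.erase_subset v t))

end Algebra

section Topology

variable [NormedAddCommGroup F] [NormedSpace ℝ F]

theorem isClosed_hull_of_linearIndepOn {t : Finset F} (ht : LinearIndepOn ℝ id (t : Set F)) :
    IsClosed (hull ℝ (t : Set F) : Set F) := by
  let L := Fintype.linearCombination ℝ (Subtype.val : ↥(t : Set F) → F)
  have hL : (hull ℝ (t : Set F) : Set F) = L '' {c | 0 ≤ c} := by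
    ext x
    simp only [SetLike.mem_coe, Submodule.mem_span_iff_of_fintype, Set.mem_image, L,
      Fintype.linearCombination_apply]
    constructor
    · rintro ⟨f, rfl⟩
      exact ⟨fun a => f a, fun a => (f a).2, by simp⟩
    · rintro ⟨c, hc, rfl⟩
      exact ⟨fun a => ⟨c a, hc a⟩, by simp⟩
  rw [hL]
  exact (LinearMap.isClosedEmbedding_of_injective
    (LinearMap.ker_eq_bot.mpr ht.fintypeLinearCombination_injective)).isClosedMap _
    (isClosed_le continuous_const continuous_id)

theorem isClosed_hull_finset [FiniteDimensional ℝ F] (s : Finset F) :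
    IsClosed (hull ℝ (s : Set F) : Set F) := by
  classical
  have hunion : (hull ℝ (s : Set F) : Set F) =
      ⋃ (t : Finset F) (_ : t ∈ s.powerset.filter fun t : Finset F =>
        LinearIndepOn ℝ id (t : Set F)), (hull ℝ (t : Set F) : Set F) := by
    ext x
    simp only [SetLike.mem_coe, Set.mem_iUnion, Finset.mem_filter, Finset.mem_powerset,
      exists_prop]
    constructor
    · intro hx
      obtain ⟨t, hts, hli, hxt⟩ := exists_linearIndepOn_subset_of_mem_hull hx
      exact ⟨t, ⟨hts, hli⟩, hxt⟩
    · rintro ⟨t, ⟨hts, -⟩, hxt⟩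
      exact Submodule.span_mono (Finset.coe_subset.mpr hts) hxt
  rw [hunion]
  exact isClosed_biUnion_finset fun t ht =>
    isClosed_hull_of_linearIndepOn (Finset.mem_filter.mp ht).2

end Topology

theorem _root_.ProperCone.innerDual_hull [NormedAddCommGroup F] [InnerProductSpace ℝ F]
    [CompleteSpace F] (s : Set F) : innerDual (hull ℝ s : Set F) = innerDual s := by
  ext y
  exact SetLike.ext_iff.mp (dual_hull (p := innerₗ F) s) y

theorem closure_hull_subset_of_innerDual_le [NormedAddCommGroup F] [InnerProductSpace ℝ F]
    [FiniteDimensional ℝ F] {M : Set F} {s : Finset F}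
    (h : innerDual (s : Set F) ≤ innerDual M) :
    closure (hull ℝ M : Set F) ⊆ hull ℝ (s : Set F) := by
  let C : ProperCone ℝ F := ⟨hull ℝ (s : Set F), isClosed_hull_finset s⟩
  calc closure (hull ℝ M : Set F)
      ⊆ innerDual (innerDual M : Set F) :=
        closure_minimal (Submodule.span_le.mpr fun x hx y hy => by
          simpa [real_inner_comm] using hy hx) (innerDual _).isClosed
    _ ⊆ innerDual (innerDual (s : Set F) : Set F) := innerDual_le_innerDual h
    _ = C := by rw [← innerDual_hull (s : Set F)]; exact congrArg _ (innerDual_innerDual C)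

end PointedCone

theorem sq_dist_sub_sq_dist {F : Type*} [NormedAddCommGroup F] [InnerProductSpace ℝ F]
    (x p q : F) : dist x q ^ 2 - dist x p ^ 2 = ‖q - p‖ ^ 2 - 2 * ⟪x - p, q - p⟫ := by
  rw [dist_eq_norm, dist_eq_norm, show x - q = (x - p) - (q - p) by abel, norm_sub_sq_real]
  ring

-- Walk from a point of `K` towards a point violating only the `i`-th constraint until that
-- constraint becomes tight.
theorem exists_isMaxOn_inner_of_minimal {F ι : Type*} [NormedAddCommGroup F]
    [InnerProductSpace ℝ F] [DecidableEq ι] {y : ι → F} {α : ι → ℝ} {K : Set F} {S : Finset ι}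
    (hS : Minimal (fun s : Finset ι => K = ⋂ i ∈ s, {x | ⟪x, y i⟫ ≤ α i}) S)
    (hK : K.Nonempty) {i : ι} (hi : i ∈ S) :
    ∃ z ∈ K, IsMaxOn (fun x => ⟪x, y i⟫) K z := by
  set A := ⋂ j ∈ S.erase i, {x : F | ⟪x, y j⟫ ≤ α j}
  have hKA : K = A ∩ {x | ⟪x, y i⟫ ≤ α i} := by
    rw [hS.prop, ← Finset.insert_erase hi, Finset.set_biInter_insert, Set.inter_comm]
  obtain ⟨x, hxA, hxi⟩ : ∃ x ∈ A, α i < ⟪x, y i⟫ := by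
    by_contra! h
    have hKA' : K = A := hKA.trans (Set.inter_eq_left.mpr fun x hx => h x hx)
    exact (Finset.erase_ssubset hi).not_ge (hS.2 hKA' (Finset.erase_subset i S))
  obtain ⟨p, hp⟩ := hK
  rw [hKA] at hp
  obtain ⟨t, ht, hteq⟩ : ∃ t ∈ Set.Icc (0 : ℝ) 1, ⟪p + t • (x - p), y i⟫ = α i :=
    intermediate_value_Icc zero_le_one (by fun_prop : Continuous _).continuousOn
      ⟨by simpa using hp.2, by simpa using hxi.le⟩
  have hAconv : Convex ℝ A := convex_iInter₂ fun j _ =>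
    convex_halfSpace_le
      ⟨fun a b => inner_add_left a b (y j), fun c a => real_inner_smul_left a (y j) c⟩ _
  refine ⟨p + t • (x - p), hKA ▸ ⟨hAconv.add_smul_sub_mem hp.1 hxA ht, hteq.le⟩, fun w hw => ?_⟩
  rw [hKA] at hw
  change ⟪w, y i⟫ ≤ ⟪p + t • (x - p), y i⟫
  rw [hteq]
  exact hw.2

theorem coneHull_eq_hull {n : ℕ} (M : Set (E n)) : coneHull M = hull ℝ M := by
  ext x
  rw [SetLike.mem_coe, Submodule.mem_span_set']
  constructor
  · rintro ⟨k, v, c, hv, hc, rfl⟩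
    exact ⟨k, fun i => ⟨c i, hc i⟩, fun i => ⟨v i, hv i⟩, by simp⟩
  · rintro ⟨k, f, g, rfl⟩
    exact ⟨k, fun i => g i, fun i => f i, fun i => (g i).2, fun i => (f i).2, by simp⟩

theorem dirCone_eq_hull {n : ℕ} (P : Set (E n)) (p : E n) :
    dirCone P p = hull ℝ ((· - p) '' P) :=
  coneHull_eq_hull _

section Voronoi

variable {n : ℕ} {P : Set (E n)} {p : E n}

theorem self_mem_voronoiCell : p ∈ voronoiCell P p := fun q _ => by simp

theorem inner_nonpos_of_forall_add_smul_mem_voronoiCell {u q : E n}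
    (h : ∀ t : ℝ, 0 ≤ t → p + t • u ∈ voronoiCell P p) (hq : q ∈ P) : ⟪u, q - p⟫ ≤ 0 := by
  by_contra! hpos
  set t := (‖q - p‖ ^ 2 + 1) / ⟪u, q - p⟫
  have ht : t * ⟪u, q - p⟫ = ‖q - p‖ ^ 2 + 1 := div_mul_cancel₀ _ hpos.ne'
  have hle : dist (p + t • u) p ^ 2 ≤ dist (p + t • u) q ^ 2 :=
    pow_le_pow_left₀ dist_nonneg (h t (by positivity) q hq) 2
  have := sq_dist_sub_sq_dist (p + t • u) p q
  rw [add_sub_cancel_left, real_inner_smul_left] at this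
  nlinarith

theorem innerDual_le_innerDual_of_subset_voronoiCell {ι : Type*} {y : ι → E n} {α : ι → ℝ}
    {S : Set ι} (hS : ⋂ i ∈ S, {x | ⟪x, y i⟫ ≤ α i} ⊆ voronoiCell P p)
    (hp : ∀ i ∈ S, ⟪p, y i⟫ ≤ α i) :
    innerDual (y '' S) ≤ innerDual ((· - p) '' P) := by
  intro u hu
  rw [mem_innerDual] at hu ⊢
  rintro _ ⟨q, hq, rfl⟩
  have hray : ∀ t : ℝ, 0 ≤ t → p + t • -u ∈ voronoiCell P p := fun t ht =>
    hS <| Set.mem_iInter₂.mpr fun i hi => by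
      have := hu (Set.mem_image_of_mem y hi)
      simp only [Set.mem_ofPred_eq, inner_add_left, real_inner_smul_left, inner_neg_left]
      nlinarith [hp i hi, mul_nonneg ht this, real_inner_comm u (y i)]
  have := inner_nonpos_of_forall_add_smul_mem_voronoiCell hray hq
  rw [inner_neg_left, real_inner_comm] at this
  linarith

theorem IsDiscretePointSet.eventually_forall_dist_le (hP : IsDiscretePointSet P) (z : E n) :
    ∀ᶠ x in 𝓝 z, ∀ q ∈ P, dist z p < dist z q → dist x p ≤ dist x q := by
  set B := Metric.closedBall z (dist z p + 1)
  have hnear : ∀ᶠ x in 𝓝 z, ∀ q ∈ P ∩ B, dist z p < dist z q → dist x p < dist x q := by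
    refine (hP B Metric.isBounded_closedBall).eventually_all.2 fun q _ => ?_
    by_cases h : dist z p < dist z q
    · filter_upwards [(tendsto_id.dist tendsto_const_nhds).eventually_lt
        (tendsto_id.dist tendsto_const_nhds) h] with x hx _ using hx
    · exact Eventually.of_forall fun x h' => absurd h' h
  filter_upwards [hnear, Metric.ball_mem_nhds z one_half_pos] with x hx hxz q hq hpq
  by_cases hqB : q ∈ B
  · exact (hx q ⟨hq, hqB⟩ hpq).le
  · rw [Metric.mem_closedBall, not_le] at hqB
    rw [Metric.mem_ball] at hxz
    linarith [dist_triangle x z p, dist_triangle z x q, dist_comm x z, dist_comm q z]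

theorem IsDiscretePointSet.mem_dirCone_of_isMaxOn (hP : IsDiscretePointSet P) {z y : E n}
    (hz : z ∈ voronoiCell P p) (hy : IsMaxOn (fun x => ⟪x, y⟫) (voronoiCell P p) z) :
    y ∈ dirCone P p := by
  classical
  have hfin : {q ∈ P | dist z q = dist z p}.Finite :=
    (hP _ (Metric.isBounded_closedBall (x := z) (r := dist z p))).subset
      fun q hq => ⟨hq.1, by rw [Metric.mem_closedBall, dist_comm, hq.2]⟩
  set s := hfin.toFinset.image (· - p)
  have hdual : innerDual (s : Set (E n)) ≤ innerDual {y} := by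
    intro u hu
    rw [mem_innerDual] at hu
    have hnear : ∀ᶠ t in 𝓝[>] (0 : ℝ), z - t • u ∈ voronoiCell P p := by
      have hlim : Tendsto (fun t : ℝ => z - t • u) (𝓝[>] 0) (𝓝 z) :=
        tendsto_nhdsWithin_of_tendsto_nhds
          ((continuous_const.sub (continuous_id.smul continuous_const)).tendsto' 0 z (by simp))
      filter_upwards [hlim.eventually (hP.eventually_forall_dist_le (p := p) z),
        self_mem_nhdsWithin] with t hfar ht q hq
      rcases (hz q hq).eq_or_lt with heq | hlt
      · -- `z` is on the bisector of `p` and `q`, and we move away from `q`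
        have huq := hu (Finset.mem_coe.mpr (Finset.mem_image_of_mem _
          (hfin.mem_toFinset.mpr ⟨hq, heq.symm⟩)))
        rw [real_inner_comm] at huq
        have h1 := sq_dist_sub_sq_dist z p q
        rw [heq, sub_self] at h1
        have h2 := sq_dist_sub_sq_dist (z - t • u) p q
        rw [sub_right_comm, inner_sub_left, real_inner_smul_left] at h2
        refine (pow_le_pow_iff_left₀ dist_nonneg dist_nonneg two_ne_zero).mp ?_
        nlinarith [mul_nonneg (le_of_lt (Set.mem_Ioi.mp ht)) huq]
      · exact hfar q hq hlt
    obtain ⟨t, ht, ht0⟩ := (hnear.and self_mem_nhdsWithin).exists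
    have := isMaxOn_iff.mp hy _ ht
    simp only [inner_sub_left, real_inner_smul_left] at this
    simp only [mem_innerDual, Set.mem_singleton_iff, forall_eq, real_inner_comm]
    nlinarith [ht0, real_inner_comm u y]
  have hs : (s : Set (E n)) ⊆ (· - p) '' P := by
    intro v hv
    obtain ⟨q, hq, rfl⟩ := Finset.mem_image.mp hv
    exact ⟨q, (hfin.mem_toFinset.mp hq).1, rfl⟩
  rw [dirCone_eq_hull]
  exact Submodule.span_mono hs (closure_hull_subset_of_innerDual_le hdual
    (subset_closure (subset_hull rfl)))

end Voronoi

theorem stmt13_general {n : ℕ} (P : Set (E n)) (hP : IsDiscretePointSet P) (p : E n)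
    (hnc : ¬ IsClosed (dirCone P p)) :
    ¬ IsPolyhedron (voronoiCell P p) := by
  classical
  rintro ⟨k, y, α, hV⟩
  obtain ⟨S, -, hS⟩ := exists_minimal_le_of_wellFoundedLT
    (fun s : Finset (Fin k) => voronoiCell P p = ⋂ i ∈ s, {x | ⟪x, y i⟫ ≤ α i}) Finset.univ
    (by simpa using hV)
  have hnormals : ((S.image y : Finset (E n)) : Set (E n)) ⊆ dirCone P p := by
    intro v hv
    obtain ⟨i, hi, rfl⟩ := Finset.mem_image.mp hv
    obtain ⟨z, hz, hmax⟩ := exists_isMaxOn_inner_of_minimal hS ⟨p, self_mem_voronoiCell⟩ hi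
    exact hP.mem_dirCone_of_isMaxOn hz hmax
  have hdual : innerDual ((S.image y : Finset (E n)) : Set (E n)) ≤ innerDual ((· - p) '' P) := by
    rw [Finset.coe_image]
    exact innerDual_le_innerDual_of_subset_voronoiCell hS.prop.symm.subset
      (Set.mem_iInter₂.mp (hS.prop ▸ self_mem_voronoiCell))
  rw [dirCone_eq_hull] at hnc hnormals
  exact hnc (closure_subset_iff_isClosed.mp
    ((closure_hull_subset_of_innerDual_le hdual).trans (Submodule.span_le.mpr hnormals)))

theorem stmt13 {n : ℕ} (P : Set (E n)) (hP : IsDiscretePointSet P) (p : E n) (hp : p ∈ P)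
    (hbd : p ∈ frontier (convexHull ℝ P))
    (hnc : ¬ IsClosed (dirCone P p)) :
    ¬ IsPolyhedron (voronoiCell P p) :=
  stmt13_general P hP p hnc
end
end
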